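/- arXiv:1410.8816 — 7 statements merged into one kernel-verified Lean document; each statement's English description precedes it below -/
import Mathlib

section
/- Let A be a real r×d matrix and b ∈ ℝ^r, let F and S be index sets with S nonempty, let x^s ∈ ℝ^d for each s ∈ S satisfy A x^s ≤ b, let w^f : ℝ^d → ℝ be an affine function for each f ∈ F, and let C : F → ℝ satisfy: for every f ∈ F and every x ∈ ℝ^d with Ax ≤ b one has w^f(x) ≤ C(f). Then there exist nonnegative reals T(f,j) (f ∈ F, j ∈ [r]) and μ(f) ≥ 0 (f ∈ F) such that for all f ∈ F and s ∈ S: C(f) − w^f(x^s) = Σ_{j=1}^{r} T(f,j) · (b_j − A_j x^s) + μ(f). In particular, setting U(j,s) := b_j − A_j x^s ≥ 0, the matrix M(f,s) := C(f) − w^f(x^s) admits the factorization M = TU + μ𝟙 with T, U, μ entrywise nonnegative. -/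
/-!
By the affine Farkas lemma, the validity of `w f ≤ C f` on the polyhedron `A y ≤ b` is witnessed
by a row `T f ≥ 0` with `T f ᵥ* A = v` and `T f ⬝ᵥ b ≤ C f - c` (where `w f = c + v ⬝ᵥ ·`);
then `μ f` is the remaining gap. The affine Farkas lemma reduces to the conic one for the
homogenized generators `(1, 0)` and `(b i, A i)`, and the conic one is hyperplane separation from
a finitely generated cone, which is closed because by Carathéodory's theorem it is a finite union
of images of orthants under injective linear maps.
-/

open Matrix Function

lemma exists_nonneg_sub_smul_eq_zero {ι : Type*} [Fintype ι] {t e : ι → ℝ} (ht : 0 ≤ t)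
    (he : ∃ i, 0 < e i) : ∃ a : ℝ, 0 ≤ t - a • e ∧ ∃ i, 0 < e i ∧ t i - a * e i = 0 := by
  classical
  obtain ⟨i₀, hi₀, hmin⟩ := Finset.exists_min_image {i | 0 < e i} (fun i => t i / e i)
    (by simpa [Finset.Nonempty] using he)
  simp only [Finset.mem_filter_univ] at hi₀ hmin
  refine ⟨t i₀ / e i₀, fun i => ?_, i₀, hi₀, by field_simp; ring⟩
  simp only [Pi.zero_apply, Pi.sub_apply, Pi.smul_apply, smul_eq_mul, sub_nonneg]
  rcases le_or_gt (e i) 0 with hei | hei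
  · exact (mul_nonpos_of_nonneg_of_nonpos (div_nonneg (ht i₀) hi₀.le) hei).trans (ht i)
  · exact (le_div_iff₀ hei).1 (hmin i hei)

lemma exists_pos_of_not_linearIndepOn {ι M : Type*} [Fintype ι] [AddCommGroup M] [Module ℝ M]
    {g : ι → M} {s : Set ι} (h : ¬ LinearIndepOn ℝ g s) :
    ∃ e : ι → ℝ, support e ⊆ s ∧ ∑ i, e i • g i = 0 ∧ ∃ i, 0 < e i := by
  obtain ⟨l, hls, hl, hl0⟩ := by simpa [linearIndepOn_iff] using h
  obtain ⟨i, hi⟩ := Finsupp.ne_iff.1 hl0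
  -- squaring the coefficient `l i` makes it positive without a case split on its sign
  refine ⟨l i • ⇑l, (support_smul_subset_right _ _).trans ?_, ?_, i, ?_⟩
  · simpa [Finsupp.fun_support_eq] using (Finsupp.mem_supported ℝ l).1 hls
  · rw [Finsupp.linearCombination_apply, Finsupp.sum_fintype _ _ (by simp)] at hl
    simp [mul_smul, ← Finset.smul_sum, hl]
  · simpa [Pi.smul_apply] using mul_self_pos.2 hi

theorem exists_linearIndepOn_support {ι M : Type*} [Fintype ι] [AddCommGroup M] [Module ℝ M]
    (g : ι → M) {t : ι → ℝ} (ht : 0 ≤ t) :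
    ∃ t' : ι → ℝ, 0 ≤ t' ∧ LinearIndepOn ℝ g (support t') ∧ ∑ i, t' i • g i = ∑ i, t i • g i := by
  induction hn : (support t).ncard using Nat.strong_induction_on generalizing t with
  | _ n ih =>
  by_cases hli : LinearIndepOn ℝ g (support t)
  · exact ⟨t, ht, hli, rfl⟩
  obtain ⟨e, he_supp, he_sum, he_pos⟩ := exists_pos_of_not_linearIndepOn hli
  obtain ⟨a, hnonneg, i, hei, hi⟩ := exists_nonneg_sub_smul_eq_zero ht he_pos
  have hlt : support (t - a • e) ⊂ support t := by
    refine (Set.ssubset_iff_of_subset ?_).2 ⟨i, he_supp hei.ne', by simpa using hi⟩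
    exact (support_sub _ _).trans (Set.union_subset subset_rfl
      ((support_smul_subset_right _ _).trans he_supp))
  obtain ⟨t', ht', hli', hsum⟩ := ih _ (hn ▸ Set.ncard_lt_ncard hlt) hnonneg rfl
  refine ⟨t', ht', hli', ?_⟩
  simp [hsum, sub_smul, Finset.sum_sub_distrib, mul_smul, ← Finset.smul_sum, he_sum]

namespace PointedCone

variable {E : Type*} [AddCommGroup E] [Module ℝ E]

lemma mem_hull_range_iff {ι : Type*} [Fintype ι] {g : ι → E} {x : E} :
    x ∈ hull ℝ (Set.range g) ↔ ∃ t : ι → ℝ, 0 ≤ t ∧ ∑ i, t i • g i = x := by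
  rw [Submodule.mem_span_range_iff_exists_fun]
  constructor
  · rintro ⟨c, rfl⟩
    exact ⟨fun i => c i, fun i => (c i).2, rfl⟩
  · rintro ⟨t, ht, rfl⟩
    exact ⟨fun i => ⟨t i, ht i⟩, rfl⟩

lemma hull_range_eq_iUnion {ι : Type*} [Fintype ι] (g : ι → E) :
    (hull ℝ (Set.range g) : Set E) =
      ⋃ s : {s : Set ι // LinearIndepOn ℝ g s}, hull ℝ (Set.range fun i : s.1 => g i) := by
  refine subset_antisymm (fun x hx => ?_) (Set.iUnion_subset fun s =>
    Submodule.span_mono (Set.range_subset_iff.2 fun i => Set.mem_range_self _))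
  obtain ⟨t, ht, rfl⟩ := mem_hull_range_iff.1 hx
  obtain ⟨t', ht', hli, hsum⟩ := exists_linearIndepOn_support g ht
  refine Set.mem_iUnion.2 ⟨⟨_, hli⟩, hsum ▸ ?_⟩
  refine Submodule.sum_mem _ fun i _ => ?_
  by_cases hi : t' i = 0
  · simp [hi]
  · exact smul_mem _ (ht' i) (subset_hull ⟨⟨i, hi⟩, rfl⟩)

variable [TopologicalSpace E] [IsTopologicalAddGroup E] [ContinuousSMul ℝ E] [T2Space E]

lemma isClosed_hull_range_of_linearIndependent {ι : Type*} [Finite ι] {g : ι → E}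
    (hg : LinearIndependent ℝ g) : IsClosed (hull ℝ (Set.range g) : Set E) := by
  have := Fintype.ofFinite ι
  have hset : (hull ℝ (Set.range g) : Set E) = Fintype.linearCombination ℝ g '' Set.Ici 0 := by
    ext x
    simp [mem_hull_range_iff, Fintype.linearCombination_apply]
  rw [hset]
  refine (LinearMap.isClosedEmbedding_of_injective ?_).isClosedMap _ isClosed_Ici
  exact LinearMap.ker_eq_bot.2 (linearIndependent_iff_injective_fintypeLinearCombination.1 hg)

theorem isClosed_hull_range {ι : Type*} [Fintype ι] (g : ι → E) :
    IsClosed (hull ℝ (Set.range g) : Set E) := by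
  rw [hull_range_eq_iUnion]
  exact isClosed_iUnion_of_finite fun s => isClosed_hull_range_of_linearIndependent s.2

end PointedCone

theorem exists_nonneg_sum_smul_eq_of_forall_dotProduct_nonneg {ι κ : Type*} [Fintype ι]
    [Fintype κ] (g : ι → κ → ℝ) (v : κ → ℝ)
    (h : ∀ y, (∀ i, 0 ≤ g i ⬝ᵥ y) → 0 ≤ v ⬝ᵥ y) :
    ∃ t : ι → ℝ, 0 ≤ t ∧ ∑ i, t i • g i = v := by
  classical
  let K : ProperCone ℝ (κ → ℝ) :=
    { toSubmodule := PointedCone.hull ℝ (Set.range g)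
      isClosed' := PointedCone.isClosed_hull_range g }
  suffices hv : v ∈ K from PointedCone.mem_hull_range_iff.1 hv
  by_contra hv
  obtain ⟨f, hfK, hfv⟩ := K.hyperplane_separation_point hv
  have hf : ∀ z, f z = z ⬝ᵥ fun k => f fun j => if k = j then 1 else 0 :=
    LinearMap.pi_apply_eq_sum_univ f.toLinearMap
  refine hfv.not_ge ((hf v).symm ▸ h _ fun i => ?_)
  rw [← hf]
  exact hfK _ (PointedCone.subset_hull (Set.mem_range_self i))

lemma Option.elim'_dotProduct {κ R : Type*} [Fintype κ] [NonUnitalNonAssocSemiring R] (a : R)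
    (p : κ → R) (y : Option κ → R) :
    Option.elim' a p ⬝ᵥ y = a * y none + p ⬝ᵥ (y ∘ some) :=
  Fintype.sum_option _

section AffineFarkas

variable {ι κ : Type*} [Fintype κ] {A : Matrix ι κ ℝ} {b : ι → ℝ} {v : κ → ℝ} {c : ℝ}

lemma dotProduct_le_mul_of_mulVec_le_smul (hbound : ∀ y, A *ᵥ y ≤ b → v ⬝ᵥ y ≤ c) {s : ℝ}
    (hs : 0 < s) {y : κ → ℝ} (hy : A *ᵥ y ≤ s • b) : v ⬝ᵥ y ≤ s * c := by
  have h := hbound (s⁻¹ • y) (by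
    rw [mulVec_smul, ← inv_smul_smul₀ hs.ne' b]
    exact smul_le_smul_of_nonneg_left hy (inv_nonneg.2 hs.le))
  rwa [dotProduct_smul, smul_eq_mul, inv_mul_le_iff₀ hs] at h

lemma mul_add_dotProduct_nonneg (hfeas : ∃ x, A *ᵥ x ≤ b)
    (hbound : ∀ y, A *ᵥ y ≤ b → v ⬝ᵥ y ≤ c) {σ : ℝ} (hσ : 0 ≤ σ) {u : κ → ℝ}
    (hu : ∀ i, 0 ≤ b i * σ + A i ⬝ᵥ u) : 0 ≤ c * σ + v ⬝ᵥ u := by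
  obtain ⟨x, hx⟩ := hfeas
  by_contra! hneg
  -- `x - lam • u` satisfies `A y ≤ (1 + lam * σ) • b`, but for large `lam` the objective
  -- exceeds `(1 + lam * σ) * c`
  set δ := c * σ + v ⬝ᵥ u
  set lam := (c - v ⬝ᵥ x + 1) / -δ
  have hlam : 0 ≤ lam := div_nonneg (by linarith [hbound x hx]) (by linarith)
  have hray : A *ᵥ (x - lam • u) ≤ (1 + lam * σ) • b := fun i => by
    have := mul_nonneg hlam (hu i)
    have hxi : A i ⬝ᵥ x ≤ b i := hx i
    simp only [mulVec_sub, mulVec_smul, Pi.sub_apply, Pi.smul_apply, smul_eq_mul]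
    change A i ⬝ᵥ x - lam * A i ⬝ᵥ u ≤ _
    nlinarith
  have := dotProduct_le_mul_of_mulVec_le_smul hbound (by positivity) hray
  have hδ : lam * δ = -(c - v ⬝ᵥ x + 1) := by
    have := hneg.ne
    simp only [lam]; field_simp
  rw [dotProduct_sub, dotProduct_smul, smul_eq_mul] at this
  nlinarith

theorem exists_nonneg_vecMul_eq_of_forall_dotProduct_le [Fintype ι] (hfeas : ∃ x, A *ᵥ x ≤ b)
    (hbound : ∀ y, A *ᵥ y ≤ b → v ⬝ᵥ y ≤ c) :
    ∃ t : ι → ℝ, 0 ≤ t ∧ t ᵥ* A = v ∧ t ⬝ᵥ b ≤ c := by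
  let g : Option ι → Option κ → ℝ :=
    Option.elim' (Option.elim' 1 0) fun i => Option.elim' (b i) (A i)
  obtain ⟨t, ht, hsum⟩ := exists_nonneg_sum_smul_eq_of_forall_dotProduct_nonneg g
    (Option.elim' c v) fun y hy => by
      have hσ : 0 ≤ y none := by simpa [g, Option.elim'_dotProduct] using hy none
      rw [Option.elim'_dotProduct]
      exact mul_add_dotProduct_nonneg hfeas hbound hσ fun i => by
        simpa [g, Option.elim'_dotProduct] using hy (some i)
  have hcoord := congrFun hsum
  refine ⟨t ∘ some, fun i => ht (some i), funext fun k => ?_, ?_⟩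
  · simpa [g, Fintype.sum_option, vecMul, dotProduct] using hcoord (some k)
  · have hc := hcoord none
    simp only [Finset.sum_apply, Pi.smul_apply, smul_eq_mul, Fintype.sum_option, Option.elim'_none,
      mul_one, Option.elim'_some, g] at hc
    have h0 : 0 ≤ t none := ht none
    change ∑ i, t (some i) * b i ≤ c
    linarith

end AffineFarkas

/-- First direction of the factorization theorem for LP formulations:
every size-`r` LP formulation of an optimization problem yields a size-`r`
LP factorization of the slack matrix `M(f,s) = C(f) − w^f(x^s)`. -/
theorem lp_formulation_to_lp_factorization {r d : ℕ} {F S : Type*} [Nonempty S]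
    (A : Matrix (Fin r) (Fin d) ℝ) (b : Fin r → ℝ)
    (x : S → Fin d → ℝ) (hx : ∀ s j, A j ⬝ᵥ x s ≤ b j)
    (w : F → (Fin d → ℝ) → ℝ)
    (hw : ∀ f, ∃ (c : ℝ) (v : Fin d → ℝ), ∀ y, w f y = c + v ⬝ᵥ y)
    (C : F → ℝ)
    (hC : ∀ f, ∀ y : Fin d → ℝ, (∀ j, A j ⬝ᵥ y ≤ b j) → w f y ≤ C f) :
    ∃ (T : F → Fin r → ℝ) (μ : F → ℝ),
      (∀ f j, 0 ≤ T f j) ∧ (∀ f, 0 ≤ μ f) ∧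
      (∀ f s, C f - w f (x s) = ∑ j, T f j * (b j - A j ⬝ᵥ x s) + μ f) ∧
      (∀ j s, 0 ≤ b j - A j ⬝ᵥ x s) := by
  obtain ⟨s₀⟩ := ‹Nonempty S›
  choose c v hcv using hw
  have hbound (f : F) (y : Fin d → ℝ) (hy : A *ᵥ y ≤ b) : v f ⬝ᵥ y ≤ C f - c f := by
    linarith [hcv f y ▸ hC f y hy]
  choose T hT hTA hTb using fun f =>
    exists_nonneg_vecMul_eq_of_forall_dotProduct_le ⟨x s₀, hx s₀⟩ (hbound f)
  refine ⟨T, fun f => C f - c f - T f ⬝ᵥ b, hT, fun f => sub_nonneg.2 (hTb f),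
    fun f s => ?_, fun j s => sub_nonneg.2 (hx s j)⟩
  change _ = T f ⬝ᵥ (b - A *ᵥ x s) + _
  rw [dotProduct_sub, dotProduct_mulVec, hTA, hcv]
  ring
end

section
/- Let F and S be index sets, let M : F × S → ℝ be a nonnegative matrix admitting a size-r LP factorization M(f,s) = Σ_{j=1}^{r} T(f,j) U(j,s) + μ(f) with T(f,j) ≥ 0, U(j,s) ≥ 0, μ(f) ≥ 0, and let C : F → ℝ be arbitrary. Define x^s := (U(1,s), …, U(r,s)) ∈ ℝ^r for s ∈ S and the affine functions w^f(x) := C(f) − μ(f) − Σ_{j=1}^{r} T(f,j) x_j for f ∈ F. Then: (i) x^s ≥ 0 entrywise for all s ∈ S; (ii) w^f(x^s) = C(f) − M(f,s) for all f ∈ F, s ∈ S; and (iii) sup{ w^f(x) : x ∈ ℝ^r, x ≥ 0 } = C(f) − μ(f) ≤ C(f) for all f ∈ F, the supremum being attained at x = 0. -/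
/-- Converse direction of the factorization theorem: from a size-`r` LP factorization
`M = TU + μ𝟙` of the slack matrix one explicitly reconstructs a size-`r` LP formulation,
namely the nonnegative orthant `x ≥ 0` in `ℝ^r`, with solutions `x^s := U(·,s)` and
affine objective functions `w^f(x) := C(f) − μ(f) − ∑ j, T(f,j) x_j`. -/
theorem lp_factorization_to_lp_formulation {F S : Type*} {r : ℕ}
    (M : F → S → ℝ) (hM : ∀ f s, 0 ≤ M f s)
    (T : F → Fin r → ℝ) (U : Fin r → S → ℝ) (μ : F → ℝ)
    (hT : ∀ f j, 0 ≤ T f j) (hU : ∀ j s, 0 ≤ U j s) (hμ : ∀ f, 0 ≤ μ f)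
    (hfact : ∀ f s, M f s = ∑ j, T f j * U j s + μ f)
    (C : F → ℝ) :
    -- (i) the points `x^s := U(·, s)` lie in the nonnegative orthant
    (∀ s : S, ∀ j : Fin r, 0 ≤ U j s) ∧
    -- (ii) the affine functions `w^f` linearize the slack: `w^f(x^s) = C(f) − M(f,s)`
    (∀ (f : F) (s : S),
      C f - μ f - ∑ j, T f j * U j s = C f - M f s) ∧
    -- (iii) the maximum of `w^f` over the nonnegative orthant is `C(f) − μ(f) ≤ C(f)`,
    -- attained (e.g. at `x = 0`)
    (∀ f : F,
      IsGreatest ((fun x : Fin r → ℝ => C f - μ f - ∑ j, T f j * x j) ''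
          {x : Fin r → ℝ | ∀ j, 0 ≤ x j}) (C f - μ f) ∧
      C f - μ f ≤ C f) := by
  refine ⟨fun s j => hU j s, fun f s => by rw [hfact]; ring, fun f => ⟨⟨⟨0, fun j => le_refl 0, by simp⟩, ?_⟩, by linarith [hμ f]⟩⟩
  rintro y ⟨x, hx, rfl⟩
  dsimp only
  have : 0 ≤ ∑ j, T f j * x j := Finset.sum_nonneg fun j _ => mul_nonneg (hT f j) (hx j)
  linarith
end

section
/- Let M₁ : F₁ × S₁ → ℝ and M₂ : F₂ × S₂ → ℝ be nonnegative matrices, R : F₁ × F₂ → ℝ₊ and C : S₂ × S₁ → ℝ₊ nonnegative matrices, and t : F₁ → ℝ₊ a nonnegative vector, such that M₁ = R · M₂ · C + t 𝟙 (entrywise: M₁(f,s) = Σ_{g,u} R(f,g) M₂(g,u) C(u,s) + t(f)) and every column of C sums to 1 (Σ_u C(u,s) = 1 for all s ∈ S₁). If M₂ admits a size-r LP factorization M₂ = TU + μ𝟙, then M₁ admits the size-r LP factorization M₁ = (RT)(UC) + (Rμ + t)𝟙; in particular rank_LP M₁ ≤ rank_LP M₂. -/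
/-- A size-`r` LP factorization of a nonnegative matrix `M : F × S → ℝ` is a
decomposition `M = TU + μ𝟙` with `T ∈ ℝ₊^{F×r}`, `U ∈ ℝ₊^{r×S}`, `μ ∈ ℝ₊^F`. -/
def IsLPFactorization {F S : Type*} (M : F → S → ℝ) (r : ℕ) : Prop :=
  ∃ (T : F → Fin r → ℝ) (U : Fin r → S → ℝ) (μ : F → ℝ),
    (∀ f j, 0 ≤ T f j) ∧ (∀ j s, 0 ≤ U j s) ∧ (∀ f, 0 ≤ μ f) ∧
    ∀ f s, M f s = ∑ j, T f j * U j s + μ f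

/-- The LP rank of `M`: the minimal size of an LP factorization. -/
noncomputable def lpRank {F S : Type*} (M : F → S → ℝ) : ℕ :=
  sInf {r | IsLPFactorization M r}

lemma lp_calc_aux {F₁ S₁ F₂ S₂ : Type*} [Fintype F₂] [Fintype S₂] {r : ℕ}
    (M₁ : F₁ → S₁ → ℝ) (M₂ : F₂ → S₂ → ℝ)
    (R : F₁ → F₂ → ℝ) (C : S₂ → S₁ → ℝ) (t : F₁ → ℝ)
    (hred : ∀ f s, M₁ f s = (∑ g, ∑ u, R f g * M₂ g u * C u s) + t f)
    (hcol : ∀ s, ∑ u, C u s = 1)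
    (T : F₂ → Fin r → ℝ) (U : Fin r → S₂ → ℝ) (μ : F₂ → ℝ)
    (hfact : ∀ g u, M₂ g u = ∑ j, T g j * U j u + μ g) :
    ∀ f s, M₁ f s =
      (∑ j, (∑ g, R f g * T g j) * (∑ u, U j u * C u s)) + ((∑ g, R f g * μ g) + t f) := by
  intro f s
  rw [hred]
  rw [← add_assoc]
  congr 1
  have h1 : ∀ g, ∑ u, R f g * M₂ g u * C u s
      = (∑ j, R f g * T g j * ∑ u, U j u * C u s) + R f g * μ g := by
    intro g
    have : ∀ u, R f g * M₂ g u * C u s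
        = (∑ j, R f g * T g j * (U j u * C u s)) + R f g * μ g * C u s := by
      intro u
      rw [hfact, mul_add, add_mul, Finset.mul_sum, Finset.sum_mul]
      congr 1
      exact Finset.sum_congr rfl fun j _ => by ring
    simp_rw [this, Finset.sum_add_distrib]
    congr 1
    · rw [Finset.sum_comm]
      exact Finset.sum_congr rfl fun j _ => by rw [Finset.mul_sum]
    · rw [← Finset.mul_sum, hcol, mul_one]
  simp_rw [h1, Finset.sum_add_distrib]
  congr 1
  rw [Finset.sum_comm]
  exact Finset.sum_congr rfl fun j _ => by rw [Finset.sum_mul]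

/-- Matrix form of affine reductions for LPs: if `M₁ = R·M₂·C + t𝟙` with `R, C, t`
nonnegative and the columns of `C` summing to `1`, then any size-`r` LP factorization
`M₂ = TU + μ𝟙` yields the size-`r` LP factorization `M₁ = (RT)(UC) + (Rμ + t)𝟙`;
in particular `rank_LP M₁ ≤ rank_LP M₂`. -/
theorem lp_factorization_reduction {F₁ S₁ F₂ S₂ : Type*} [Fintype F₂] [Fintype S₂] {r : ℕ}
    (M₁ : F₁ → S₁ → ℝ) (M₂ : F₂ → S₂ → ℝ)
    (R : F₁ → F₂ → ℝ) (C : S₂ → S₁ → ℝ) (t : F₁ → ℝ)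
    (hM₁ : ∀ f s, 0 ≤ M₁ f s) (hM₂ : ∀ g u, 0 ≤ M₂ g u)
    (hR : ∀ f g, 0 ≤ R f g) (hC : ∀ u s, 0 ≤ C u s) (ht : ∀ f, 0 ≤ t f)
    (hred : ∀ f s, M₁ f s = (∑ g, ∑ u, R f g * M₂ g u * C u s) + t f)
    (hcol : ∀ s, ∑ u, C u s = 1)
    (T : F₂ → Fin r → ℝ) (U : Fin r → S₂ → ℝ) (μ : F₂ → ℝ)
    (hT : ∀ g j, 0 ≤ T g j) (hU : ∀ j u, 0 ≤ U j u) (hμ : ∀ g, 0 ≤ μ g)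
    (hfact : ∀ g u, M₂ g u = ∑ j, T g j * U j u + μ g) :
    ((∀ f j, 0 ≤ ∑ g, R f g * T g j) ∧
     (∀ j s, 0 ≤ ∑ u, U j u * C u s) ∧
     (∀ f, 0 ≤ (∑ g, R f g * μ g) + t f) ∧
     (∀ f s, M₁ f s =
        (∑ j, (∑ g, R f g * T g j) * (∑ u, U j u * C u s)) + ((∑ g, R f g * μ g) + t f))) ∧
    lpRank M₁ ≤ lpRank M₂ := by
  constructor
  · refine ⟨fun f j => Finset.sum_nonneg fun g _ => mul_nonneg (hR f g) (hT g j),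
      fun j s => Finset.sum_nonneg fun u _ => mul_nonneg (hU j u) (hC u s),
      fun f => add_nonneg (Finset.sum_nonneg fun g _ => mul_nonneg (hR f g) (hμ g)) (ht f),
      lp_calc_aux M₁ M₂ R C t hred hcol T U μ hfact⟩
  · have hsub : {r' | IsLPFactorization M₂ r'} ⊆ {r' | IsLPFactorization M₁ r'} := by
      rintro r' ⟨T', U', μ', hT', hU', hμ', hfact'⟩
      exact ⟨fun f j => ∑ g, R f g * T' g j, fun j s => ∑ u, U' j u * C u s,
        fun f => (∑ g, R f g * μ' g) + t f,
        fun f j => Finset.sum_nonneg fun g _ => mul_nonneg (hR f g) (hT' g j),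
        fun j s => Finset.sum_nonneg fun u _ => mul_nonneg (hU' j u) (hC u s),
        fun f => add_nonneg (Finset.sum_nonneg fun g _ => mul_nonneg (hR f g) (hμ' g)) (ht f),
        lp_calc_aux M₁ M₂ R C t hred hcol T' U' μ' hfact'⟩
    have hne : {r' | IsLPFactorization M₂ r'}.Nonempty := ⟨r, T, U, μ, hT, hU, hμ, hfact⟩
    exact csInf_le_csInf (OrderBot.bddBelow _) hne hsub
end

section
/- Let M₁ : F₁ × S₁ → ℝ and M₂ : F₂ × S₂ → ℝ be nonnegative matrices, R : F₁ × F₂ → ℝ₊ and C : S₂ × S₁ → ℝ₊ nonnegative matrices, and t : F₁ → ℝ₊ a nonnegative vector, such that M₁(f,s) = Σ_{g,u} R(f,g) M₂(g,u) C(u,s) + t(f) for all f, s, and Σ_u C(u,s) = 1 for all s ∈ S₁. Suppose M₂ admits a size-d SDP factorization: there are d×d real positive semidefinite matrices T_g (g ∈ F₂) and U_u (u ∈ S₂) and μ : F₂ → ℝ₊ with M₂(g,u) = tr(T_g U_u) + μ(g). Then M₁ admits a size-d SDP factorization: the matrices T̂_f := Σ_g R(f,g) T_g and Û_s := Σ_u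 U_u C(u,s) are positive semidefinite, the numbers μ̂(f) := Σ_g R(f,g) μ(g) + t(f) are nonnegative, and M₁(f,s) = tr(T̂_f Û_s) + μ̂(f) for all f ∈ F₁, s ∈ S₁. -/
open Matrix

theorem Matrix.trace_sum_smul_mul_sum_smul {ι κ n R : Type*} [Fintype ι] [Fintype κ] [Fintype n]
    [CommSemiring R] (a : ι → R) (A : ι → Matrix n n R) (b : κ → R) (B : κ → Matrix n n R) :
    ((∑ i, a i • A i) * ∑ j, b j • B j).trace = ∑ i, ∑ j, a i * (A i * B j).trace * b j := by
  simp only [Finset.sum_mul_sum, trace_sum, smul_mul_smul_comm, trace_smul, smul_eq_mul]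
  exact Finset.sum_congr rfl fun i _ => Finset.sum_congr rfl fun j _ => by ring

theorem sum_sum_mul_add_mul_of_sum_eq_one {ι κ R : Type*} [Fintype ι] [Fintype κ]
    [CommSemiring R] (r : ι → R) (x : ι → κ → R) (m : ι → R) (c : κ → R)
    (hc : ∑ j, c j = 1) :
    ∑ i, ∑ j, r i * (x i j + m i) * c j = ∑ i, ∑ j, r i * x i j * c j + ∑ i, r i * m i := by
  simp only [mul_add, add_mul, Finset.sum_add_distrib, ← Finset.mul_sum, hc, mul_one]

theorem sdp_factorization_reduction_general {F₁ S₁ F₂ S₂ : Type*} [Fintype F₂] [Fintype S₂] {d : ℕ}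
    (M₁ : F₁ → S₁ → ℝ) (M₂ : F₂ → S₂ → ℝ)
    (R : F₁ → F₂ → ℝ) (C : S₂ → S₁ → ℝ) (t : F₁ → ℝ)
    (hR : ∀ f g, 0 ≤ R f g) (hC : ∀ u s, 0 ≤ C u s) (ht : ∀ f, 0 ≤ t f)
    (hred : ∀ f s, M₁ f s = (∑ g, ∑ u, R f g * M₂ g u * C u s) + t f)
    (hcol : ∀ s, ∑ u, C u s = 1)
    (T : F₂ → Matrix (Fin d) (Fin d) ℝ) (U : S₂ → Matrix (Fin d) (Fin d) ℝ) (μ : F₂ → ℝ)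
    (hT : ∀ g, (T g).PosSemidef) (hU : ∀ u, (U u).PosSemidef) (hμ : ∀ g, 0 ≤ μ g)
    (hfact : ∀ g u, M₂ g u = (T g * U u).trace + μ g) :
    (∀ f, (∑ g, R f g • T g).PosSemidef) ∧
    (∀ s, (∑ u, C u s • U u).PosSemidef) ∧
    (∀ f, 0 ≤ (∑ g, R f g * μ g) + t f) ∧
    (∀ f s, M₁ f s = ((∑ g, R f g • T g) * (∑ u, C u s • U u)).trace
        + ((∑ g, R f g * μ g) + t f)) := by
  refine ⟨fun f => posSemidef_sum _ fun g _ => (hT g).smul (hR f g),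
    fun s => posSemidef_sum _ fun u _ => (hU u).smul (hC u s),
    fun f => add_nonneg (Finset.sum_nonneg fun g _ => mul_nonneg (hR f g) (hμ g)) (ht f),
    fun f s => ?_⟩
  simp only [hred, hfact, sum_sum_mul_add_mul_of_sum_eq_one _ _ _ _ (hcol s),
    trace_sum_smul_mul_sum_smul, add_assoc]

/-- Matrix form of affine reductions for SDPs: if `M₁ = R·M₂·C + t𝟙` with `R, C, t`
nonnegative and the columns of `C` summing to `1`, then any size-`d` SDP factorization
`M₂(g,u) = tr(T_g U_u) + μ(g)` of `M₂` (with `T_g, U_u` psd and `μ ≥ 0`) yields a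
size-`d` SDP factorization of `M₁` with `T̂_f = ∑ g, R(f,g) T_g`,
`Û_s = ∑ u, C(u,s) U_u` and `μ̂(f) = ∑ g, R(f,g) μ(g) + t(f)`. -/
theorem sdp_factorization_reduction {F₁ S₁ F₂ S₂ : Type*} [Fintype F₂] [Fintype S₂] {d : ℕ}
    (M₁ : F₁ → S₁ → ℝ) (M₂ : F₂ → S₂ → ℝ)
    (R : F₁ → F₂ → ℝ) (C : S₂ → S₁ → ℝ) (t : F₁ → ℝ)
    (hM₁ : ∀ f s, 0 ≤ M₁ f s) (hM₂ : ∀ g u, 0 ≤ M₂ g u)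
    (hR : ∀ f g, 0 ≤ R f g) (hC : ∀ u s, 0 ≤ C u s) (ht : ∀ f, 0 ≤ t f)
    (hred : ∀ f s, M₁ f s = (∑ g, ∑ u, R f g * M₂ g u * C u s) + t f)
    (hcol : ∀ s, ∑ u, C u s = 1)
    (T : F₂ → Matrix (Fin d) (Fin d) ℝ) (U : S₂ → Matrix (Fin d) (Fin d) ℝ) (μ : F₂ → ℝ)
    (hT : ∀ g, (T g).PosSemidef) (hU : ∀ u, (U u).PosSemidef) (hμ : ∀ g, 0 ≤ μ g)
    (hfact : ∀ g u, M₂ g u = (T g * U u).trace + μ g) :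
    (∀ f, (∑ g, R f g • T g).PosSemidef) ∧
    (∀ s, (∑ u, C u s • U u).PosSemidef) ∧
    (∀ f, 0 ≤ (∑ g, R f g * μ g) + t f) ∧
    (∀ f s, M₁ f s = ((∑ g, R f g • T g) * (∑ u, C u s • U u)).trace
        + ((∑ g, R f g * μ g) + t f)) :=
  sdp_factorization_reduction_general M₁ M₂ R C t hR hC ht hred hcol T U μ hT hU hμ hfact
end

section
/- Let M and M̃ be nonnegative F×S real matrices with F, S finite, let k := rank(M̃ − M) and ε := ‖M̃ − M‖_∞ (the maximum absolute value of an entry of M̃ − M). If M̃ admits a size-r LP factorization, then the matrix M + kε·J, where J is the F×S all-ones matrix, admits a size-(r + 2k) LP factorization. In particular, rank_LP(M + kε·J) ≤ rank_LP(M̃) + 2·rank(M̃ − M). -/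
/-!
Let `D = M̃ - M`, of rank `k`. Among all `k`-tuples of rows of `D` pick one of maximal volume;
by Cramer's rule every row of `D` is a combination of these rows with coefficients `c` in
`[-1, 1]`. Writing `c = c⁺ - c⁻`,
`kε - D = ∑ⱼ c⁺ⱼ (ε - D_{gⱼ}) + ∑ⱼ c⁻ⱼ (ε + D_{gⱼ}) + ε (k - ∑ⱼ |cⱼ|)`
and all factors are nonnegative because `|D| ≤ ε` entrywise: this is an LP factorization of
`kε - D` of size `2k`. Adding it to the factorization of `M̃` gives one of `M + kε` of size
`r + 2k`.
-/

open Matrix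

open Module Submodule Set

section BoundedCoefficients

variable {𝕜 V ι : Type*} [Field 𝕜] [AddCommGroup V] [Module 𝕜 V] [Finite ι]

theorem exists_fin_linearIndependent_of_span_eq_top {v : ι → V}
    (hv : span 𝕜 (range v) = ⊤) {k : ℕ} (hk : finrank 𝕜 V = k) :
    ∃ g : Fin k → ι, LinearIndependent 𝕜 (v ∘ g) := by
  obtain ⟨κ, a, ha, hspan, hli⟩ := exists_linearIndependent' 𝕜 v
  have : Finite κ := Finite.of_injective a ha
  have : Fintype κ := Fintype.ofFinite κ
  have hcard : Fintype.card κ = k := by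
    rw [← hk, finrank_eq_card_basis (Basis.mk hli (by rw [hspan, hv]))]
  let e := (Fintype.equivFinOfCardEq hcard).symm
  exact ⟨a ∘ e, hli.comp e e.injective⟩

variable [LinearOrder 𝕜] [IsStrictOrderedRing 𝕜]

theorem exists_bounded_coeffs_of_finrank_span (v : ι → V) {k : ℕ}
    (hk : finrank 𝕜 (span 𝕜 (range v)) = k) :
    ∃ (g : Fin k → ι) (c : ι → Fin k → 𝕜),
      (∀ i j, |c i j| ≤ 1) ∧ ∀ i, v i = ∑ j, c i j • v (g j) := by
  set W := span 𝕜 (range v)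
  let w : ι → W := fun i => ⟨v i, subset_span (mem_range_self i)⟩
  have hw : span 𝕜 (range w) = ⊤ :=
    (span_range_subtype_eq_top_iff W fun i => subset_span (mem_range_self i)).2 rfl
  have : FiniteDimensional 𝕜 W := FiniteDimensional.span_of_finite 𝕜 (finite_range v)
  let e : Basis (Fin k) 𝕜 W := finBasisOfFinrankEq 𝕜 W hk
  obtain ⟨g₀, hg₀⟩ := exists_fin_linearIndependent_of_span_eq_top hw hk
  have : Nonempty (Fin k → ι) := ⟨g₀⟩
  obtain ⟨g, hg⟩ := Finite.exists_max fun g : Fin k → ι => |e.det (w ∘ g)|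
  have hvol : 0 < |e.det (w ∘ g)| := by
    refine (abs_pos.2 ?_).trans_le (hg g₀)
    have hsp := hg₀.span_eq_top_of_card_eq_finrank' (by rw [Fintype.card_fin, hk])
    exact (e.is_basis_iff_det.1 ⟨hg₀, hsp⟩).ne_zero
  have hbasis := e.is_basis_iff_det.2 (isUnit_iff_ne_zero.2 (abs_pos.1 hvol))
  let B := Basis.mk hbasis.1 hbasis.2.ge
  refine ⟨g, fun i j => B.coord j (w i), fun i j => ?_, fun i => ?_⟩
  · -- Cramer's rule
    have hcramer :
        |e.det (w ∘ Function.update g j i)| = |B.coord j (w i)| * |e.det (w ∘ g)| := by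
      rw [Function.comp_update, ← abs_mul, mul_comm]
      have := congrArg (· (w i)) (e.det_smul_mk_coord_eq_det_update hbasis.1 hbasis.2.ge j)
      simp only [LinearMap.smul_apply, smul_eq_mul, MultilinearMap.toLinearMap_apply] at this
      exact (congrArg abs this).symm
    have := hg (Function.update g j i)
    rw [hcramer] at this
    exact (mul_le_iff_le_one_left hvol).1 this
  · have := congrArg Subtype.val (B.sum_repr (w i))
    simpa [B, w] using this.symm

end BoundedCoefficients

theorem Matrix.exists_bounded_row_coeffs {𝕜 m n : Type*} [Field 𝕜] [LinearOrder 𝕜]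
    [IsStrictOrderedRing 𝕜] [Finite m] [Fintype n] (D : Matrix m n 𝕜) :
    ∃ (g : Fin D.rank → m) (c : m → Fin D.rank → 𝕜),
      (∀ i j, |c i j| ≤ 1) ∧ ∀ i l, D i l = ∑ j, c i j * D (g j) l := by
  obtain ⟨g, c, hc, hD⟩ :=
    exists_bounded_coeffs_of_finrank_span D.row D.rank_eq_finrank_span_row.symm
  exact ⟨g, c, hc, fun i l => by simpa using congrFun (hD i) l⟩

theorem le_iSup_iSup_of_finite {α F S : Type*} [ConditionallyCompleteLattice α] [Finite F]
    [Finite S] (x : F → S → α) (f : F) (s : S) : x f s ≤ ⨆ f, ⨆ s, x f s :=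
  (le_ciSup (finite_range _).bddAbove s).trans
    (le_ciSup (f := fun f => ⨆ s, x f s) (finite_range _).bddAbove f)

namespace IsLPFactorization

variable {F S : Type*}

theorem add {A B : F → S → ℝ} {r m : ℕ} (hA : IsLPFactorization A r)
    (hB : IsLPFactorization B m) : IsLPFactorization (fun f s => A f s + B f s) (r + m) := by
  obtain ⟨T, U, μ, hT, hU, hμ, hA⟩ := hA
  obtain ⟨T', U', μ', hT', hU', hμ', hB⟩ := hB
  refine ⟨fun f => Fin.append (T f) (T' f), fun j s => Fin.append (U · s) (U' · s) j,
    fun f => μ f + μ' f, fun f j => ?_, fun j s => ?_, fun f => add_nonneg (hμ f) (hμ' f),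
    fun f s => ?_⟩
  · induction j using Fin.addCases <;> simp [hT, hT']
  · induction j using Fin.addCases <;> simp [hU, hU']
  · simp only [hA, hB, Fin.sum_univ_add, Fin.append_left, Fin.append_right]
    ring

theorem mul_sub_of_bounded_coeffs {k : ℕ} {D : F → S → ℝ} {g : Fin k → F}
    {c : F → Fin k → ℝ} {ε : ℝ} (hc : ∀ f j, |c f j| ≤ 1)
    (hD : ∀ f s, D f s = ∑ j, c f j * D (g j) s) (hε : ∀ f s, |D f s| ≤ ε)
    (hε₀ : 0 ≤ ε) :
    IsLPFactorization (fun f s => k * ε - D f s) (2 * k) := by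
  have hsum (f : F) : ∑ j, |c f j| ≤ k :=
    (Finset.sum_le_sum fun j _ => hc f j).trans (by simp)
  have hpos : IsLPFactorization
      (fun f s => ∑ j, (c f j)⁺ * (ε - D (g j) s) + ε * (k - ∑ j, |c f j|)) k :=
    ⟨fun f j => (c f j)⁺, fun j s => ε - D (g j) s, fun f => ε * (k - ∑ j, |c f j|),
      fun f j => posPart_nonneg _, fun j s => by linarith [(abs_le.1 (hε (g j) s)).2],
      fun f => mul_nonneg hε₀ (sub_nonneg.2 (hsum f)), fun f s => rfl⟩
  have hneg : IsLPFactorization (fun f s => ∑ j, (c f j)⁻ * (ε + D (g j) s)) k :=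
    ⟨fun f j => (c f j)⁻, fun j s => ε + D (g j) s, 0, fun f j => negPart_nonneg _,
      fun j s => by linarith [(abs_le.1 (hε (g j) s)).1], fun f => le_rfl, fun f s => by simp⟩
  have hterm (a d : ℝ) : a⁺ * (ε - d) + a⁻ * (ε + d) = |a| * ε - a * d := by
    linear_combination ε * posPart_add_negPart a - d * posPart_sub_negPart a
  rw [two_mul]
  convert hpos.add hneg using 3 with f s
  rw [hD f s, add_right_comm, ← Finset.sum_add_distrib]
  simp only [hterm, Finset.sum_sub_distrib, ← Finset.sum_mul]
  ring

theorem rounding [Fintype F] [Fintype S] {M Mt : Matrix F S ℝ} {r : ℕ}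
    (h : IsLPFactorization (fun f s => Mt f s) r) :
    IsLPFactorization (fun f s => M f s + ((Mt - M).rank : ℝ) * ⨆ f, ⨆ s, |Mt f s - M f s|)
      (r + 2 * (Mt - M).rank) := by
  obtain ⟨g, c, hc, hD⟩ := (Mt - M).exists_bounded_row_coeffs
  have hε₀ : 0 ≤ ⨆ f, ⨆ s, |Mt f s - M f s| :=
    Real.iSup_nonneg fun f => Real.iSup_nonneg fun s => abs_nonneg _
  convert h.add (mul_sub_of_bounded_coeffs hc hD (le_iSup_iSup_of_finite _) hε₀)
    using 3 with f s
  simp only [Matrix.sub_apply]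
  ring

end IsLPFactorization

theorem lpRank_le {F S : Type*} {M : F → S → ℝ} {r : ℕ} (h : IsLPFactorization M r) :
    lpRank M ≤ r :=
  Nat.sInf_le h

theorem isLPFactorization_lpRank {F S : Type*} {M : F → S → ℝ} {r : ℕ}
    (h : IsLPFactorization M r) : IsLPFactorization M (lpRank M) :=
  Nat.sInf_mem (s := {r | IsLPFactorization M r}) ⟨r, h⟩

theorem lp_rounding_general {F S : Type*} [Fintype F] [Fintype S]
    (M Mt : Matrix F S ℝ)
    (k : ℕ) (hk : k = (Mt - M).rank)
    (ε : ℝ) (hε : ε = ⨆ f, ⨆ s, |Mt f s - M f s|)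
    (r : ℕ) (hfact : IsLPFactorization (fun f s => Mt f s) r) :
    IsLPFactorization (fun f s => M f s + (k : ℝ) * ε) (r + 2 * k) ∧
    lpRank (fun f s => M f s + (k : ℝ) * ε) ≤ lpRank (fun f s => Mt f s) + 2 * k := by
  subst hk hε
  exact ⟨hfact.rounding, lpRank_le (isLPFactorization_lpRank hfact).rounding⟩

/-- Rounding a matrix approximation to a problem approximation, LP case: if `M̃` is
nonnegative with a size-`r` LP factorization, `k = rank(M̃ − M)` and
`ε = ‖M̃ − M‖_∞`, then `M + kε·J` (with `J` the all-ones matrix) admits a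
size-`(r + 2k)` LP factorization; in particular
`rank_LP (M + kε·J) ≤ rank_LP M̃ + 2·rank(M̃ − M)`. -/
theorem lp_rounding {F S : Type*} [Fintype F] [Fintype S]
    (M Mt : Matrix F S ℝ)
    (hM : ∀ f s, 0 ≤ M f s) (hMt : ∀ f s, 0 ≤ Mt f s)
    (k : ℕ) (hk : k = (Mt - M).rank)
    (ε : ℝ) (hε : ε = ⨆ f, ⨆ s, |Mt f s - M f s|)
    (r : ℕ) (hfact : IsLPFactorization (fun f s => Mt f s) r) :
    IsLPFactorization (fun f s => M f s + (k : ℝ) * ε) (r + 2 * k) ∧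
    lpRank (fun f s => M f s + (k : ℝ) * ε) ≤ lpRank (fun f s => Mt f s) + 2 * k :=
  lp_rounding_general M Mt k hk ε hε r hfact
end

section
/- Let M and M̃ be nonnegative F×S real matrices with F, S finite, let k := rank(M̃ − M) and ε := ‖M̃ − M‖_∞ (the maximum absolute value of an entry of M̃ − M). If M̃ admits a size-d SDP factorization, then the matrix M + kε·J, where J is the F×S all-ones matrix, admits a size-(d + 2k) SDP factorization. In particular, rank_SDP(M + kε·J) ≤ rank_SDP(M̃) + 2·rank(M̃ − M). -/
open Matrix

/-- A size-`d` SDP factorization of a nonnegative matrix `M : F × S → ℝ` consists of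
`d × d` real psd matrices `T_f` (`f ∈ F`) and `U_s` (`s ∈ S`) together with a
nonnegative vector `μ : F → ℝ` such that `M(f,s) = tr(T_f U_s) + μ(f)`. -/
def IsSDPFactorization {F S : Type*} (M : F → S → ℝ) (d : ℕ) : Prop :=
  ∃ (T : F → Matrix (Fin d) (Fin d) ℝ) (U : S → Matrix (Fin d) (Fin d) ℝ) (μ : F → ℝ),
    (∀ f, (T f).PosSemidef) ∧ (∀ s, (U s).PosSemidef) ∧ (∀ f, 0 ≤ μ f) ∧
    ∀ f s, M f s = (T f * U s).trace + μ f

/-- The SDP rank of `M`: the minimal size of an SDP factorization. -/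
noncomputable def sdpRank {F S : Type*} (M : F → S → ℝ) : ℕ :=
  sInf {d | IsSDPFactorization M d}

/-!
Write `Mt - M = X * B`, where `B` consists of `k` rows of `Mt - M` containing a `k × k` minor of
maximal absolute determinant: by Cramer's rule every entry of `X` is a ratio of two such minors,
hence at most `1` in absolute value, while the entries of `B` are at most `ε`. For `|α| ≤ 1` and
`|β| ≤ ε`, `ε - α β = (1 + α) (ε - β) / 2 + (1 - α) (ε + β) / 2` is a sum of two products of
nonnegative numbers, so `M + kε·J = Mt + ∑ᵢ (ε - Xᵢ Bᵢ)` is `Mt` plus a matrix with a nonnegative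
factorization of size `2k`, which `2k` extra diagonal coordinates add to an SDP factorization
of `Mt`.
-/

namespace Matrix

open Submodule

section Field

variable {K : Type*} [Field K] {m n : Type*} {k : ℕ}

theorem linearIndependent_rows_of_submatrix_det_ne_zero {A : Matrix m n K} {r : Fin k → m}
    {c : Fin k → n} (h : (A.submatrix r c).det ≠ 0) : LinearIndependent K (A.row ∘ r) :=
  LinearIndependent.of_comp (LinearMap.funLeft K K c) <|
    linearIndependent_rows_iff_isUnit.mpr ((isUnit_iff_isUnit_det _).mpr h.isUnit)

variable [Fintype m] [Fintype n]

theorem exists_linearIndependent_rows_of_rank_eq (A : Matrix m n K) (hA : A.rank = k) :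
    ∃ r : Fin k → m, LinearIndependent K (A.row ∘ r) := by
  obtain ⟨κ, a, ha, hspan, hli⟩ := exists_linearIndependent' K A.row
  have : Finite κ := Finite.of_injective a ha
  have : Fintype κ := Fintype.ofFinite κ
  have hcard : Fintype.card κ = k := by
    rw [← hA, rank_eq_finrank_span_row, ← hspan, finrank_span_eq_card hli]
  let e : Fin k ≃ κ := (Fintype.equivFinOfCardEq hcard).symm
  exact ⟨a ∘ e, hli.comp e e.injective⟩

theorem exists_submatrix_det_ne_zero_of_rank_eq (A : Matrix m n K) (hA : A.rank = k) :
    ∃ (r : Fin k → m) (c : Fin k → n), (A.submatrix r c).det ≠ 0 := by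
  obtain ⟨r, hr⟩ := A.exists_linearIndependent_rows_of_rank_eq hA
  have hrank : (A.submatrix r id)ᵀ.rank = k := by
    rw [rank_transpose]
    exact hr.rank_matrix.trans (Fintype.card_fin k)
  obtain ⟨c, hc⟩ := (A.submatrix r id)ᵀ.exists_linearIndependent_rows_of_rank_eq hrank
  refine ⟨r, c, ?_⟩
  have := linearIndependent_cols_iff_isUnit.mp hc
  exact (isUnit_iff_isUnit_det _ |>.mp this).ne_zero

theorem exists_mul_submatrix_eq_of_submatrix_det_ne_zero {A : Matrix m n K} (hA : A.rank = k)
    {r : Fin k → m} {c : Fin k → n} (h : (A.submatrix r c).det ≠ 0) :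
    ∃ X : Matrix m (Fin k) K, X * A.submatrix r id = A := by
  have hli := linearIndependent_rows_of_submatrix_det_ne_zero h
  have hspan : span K (Set.range (A.row ∘ r)) = span K (Set.range A.row) := by
    refine eq_of_le_of_finrank_eq (span_mono (Set.range_comp_subset_range r A.row)) ?_
    rw [finrank_span_eq_card hli, Fintype.card_fin, ← rank_eq_finrank_span_row, hA]
  have hmem : ∀ f, ∃ x : Fin k → K, ∑ i, x i • A (r i) = A f := fun f =>
    (mem_span_range_iff_exists_fun K).mp (hspan ▸ subset_span (Set.mem_range_self f))
  choose X hX using hmem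
  refine ⟨Matrix.of X, ?_⟩
  ext f s
  simpa [mul_apply, Finset.sum_apply] using congrFun (hX f) s

end Field

theorem det_submatrix_update_eq_mul {R : Type*} [CommRing R] {m n : Type*} [Fintype m] {k : ℕ}
    {A : Matrix m n R} {X : Matrix m (Fin k) R} {r : Fin k → m}
    (hX : X * A.submatrix r id = A) (c : Fin k → n) (f : m) (i : Fin k) :
    (A.submatrix (Function.update r i f) c).det = X f i * (A.submatrix r c).det := by
  have hrow : A.submatrix (Function.update r i f) c
      = (A.submatrix r c).updateRow i (∑ j, X f j • (A.submatrix r c) j) := by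
    ext i' j'
    rcases eq_or_ne i' i with rfl | hi
    · simpa [mul_apply, Finset.sum_apply, eq_comm] using congrFun (congrFun hX f) (c j')
    · simp [hi]
  rw [hrow, det_updateRow_sum, smul_eq_mul]

theorem exists_mul_submatrix_eq_of_abs_le_one {K : Type*} [Field K] [LinearOrder K]
    [IsStrictOrderedRing K] {m n : Type*} [Fintype m] [Fintype n] {k : ℕ}
    (A : Matrix m n K) (hA : A.rank = k) :
    ∃ (X : Matrix m (Fin k) K) (r : Fin k → m), X * A.submatrix r id = A ∧ ∀ f i, |X f i| ≤ 1 := by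
  obtain ⟨r, c, hrc⟩ := A.exists_submatrix_det_ne_zero_of_rank_eq hA
  obtain ⟨⟨r₀, c₀⟩, -, hmax⟩ := Finset.exists_max_image Finset.univ
    (fun p : (Fin k → m) × (Fin k → n) => |(A.submatrix p.1 p.2).det|) ⟨(r, c), Finset.mem_univ _⟩
  have hdet : (A.submatrix r₀ c₀).det ≠ 0 := by
    intro h0
    simpa [h0, hrc] using hmax (r, c) (Finset.mem_univ _)
  obtain ⟨X, hX⟩ := exists_mul_submatrix_eq_of_submatrix_det_ne_zero hA hdet
  refine ⟨X, r₀, hX, fun f i => ?_⟩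
  have h := hmax (Function.update r₀ i f, c₀) (Finset.mem_univ _)
  rw [det_submatrix_update_eq_mul hX, abs_mul] at h
  exact (mul_le_iff_le_one_left (abs_pos.mpr hdet)).mp h

theorem PosSemidef.fromBlocks_zero {R : Type*} [Ring R] [PartialOrder R] [StarRing R]
    [AddLeftMono R] {m n : Type*} [Fintype m] [Fintype n] {A : Matrix m m R} {D : Matrix n n R}
    (hA : A.PosSemidef) (hD : D.PosSemidef) : (fromBlocks A 0 0 D).PosSemidef := by
  rw [posSemidef_iff_dotProduct_mulVec]
  refine ⟨hA.isHermitian.fromBlocks (by simp) hD.isHermitian, fun x => ?_⟩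
  rw [← Sum.elim_comp_inl_inr x, fromBlocks_mulVec]
  simp only [zero_mulVec, add_zero, zero_add, Function.star_sumElim, sumElim_dotProduct_sumElim]
  exact add_nonneg (hA.dotProduct_mulVec_nonneg _) (hD.dotProduct_mulVec_nonneg _)

end Matrix

section SDPFactorization

variable {F S : Type*}

theorem IsSDPFactorization.sdpRank {M : F → S → ℝ} {d : ℕ} (h : IsSDPFactorization M d) :
    IsSDPFactorization M (sdpRank M) :=
  Nat.sInf_mem (s := {d | IsSDPFactorization M d}) ⟨d, h⟩

theorem sdpRank_le {M : F → S → ℝ} {d : ℕ} (h : IsSDPFactorization M d) : sdpRank M ≤ d :=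
  Nat.sInf_le h

theorem isSDPFactorization_card {M : F → S → ℝ} {n : Type*} [Fintype n]
    (T : F → Matrix n n ℝ) (U : S → Matrix n n ℝ) (μ : F → ℝ)
    (hT : ∀ f, (T f).PosSemidef) (hU : ∀ s, (U s).PosSemidef) (hμ : ∀ f, 0 ≤ μ f)
    (hM : ∀ f s, M f s = (T f * U s).trace + μ f) :
    IsSDPFactorization M (Fintype.card n) := by
  let e := (Fintype.equivFin n).symm
  refine ⟨fun f => (T f).submatrix e e, fun s => (U s).submatrix e e, μ,
    fun f => (hT f).submatrix e, fun s => (hU s).submatrix e, hμ, fun f s => ?_⟩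
  rw [submatrix_mul_equiv, hM]
  exact congrArg (· + μ f) (e.sum_comp fun i => (T f * U s) i i).symm

theorem IsSDPFactorization.add_sum_mul {M : F → S → ℝ} {d : ℕ} (h : IsSDPFactorization M d)
    {ι : Type*} [Fintype ι] (p : F → ι → ℝ) (q : S → ι → ℝ) (hp : ∀ f, 0 ≤ p f)
    (hq : ∀ s, 0 ≤ q s) :
    IsSDPFactorization (fun f s => M f s + ∑ i, p f i * q s i) (d + Fintype.card ι) := by
  classical
  obtain ⟨T, U, μ, hT, hU, hμ, hM⟩ := h
  have := isSDPFactorization_card (M := fun f s => M f s + ∑ i, p f i * q s i)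
    (fun f => fromBlocks (T f) 0 0 (diagonal (p f)))
    (fun s => fromBlocks (U s) 0 0 (diagonal (q s))) μ
    (fun f => (hT f).fromBlocks_zero (.diagonal (hp f)))
    (fun s => (hU s).fromBlocks_zero (.diagonal (hq s))) hμ
    fun f s => by
      simp only [hM, trace, diag_apply, fromBlocks_multiply, Matrix.mul_zero, add_zero,
        Matrix.zero_mul, diagonal_mul_diagonal, zero_add, Fintype.sum_sum_type,
        fromBlocks_apply₁₁, fromBlocks_apply₂₂, diagonal_apply_eq]
      ring
  simpa using this

theorem IsSDPFactorization.add_rank_mul_of_abs_sub_le [Fintype F] [Fintype S] {M Mt : Matrix F S ℝ}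
    {d k : ℕ} {ε : ℝ} (h : IsSDPFactorization (fun f s => Mt f s) d) (hk : (Mt - M).rank = k)
    (hε : ∀ f s, |Mt f s - M f s| ≤ ε) :
    IsSDPFactorization (fun f s => M f s + k * ε) (d + 2 * k) := by
  obtain ⟨X, r, hX, hX₁⟩ := (Mt - M).exists_mul_submatrix_eq_of_abs_le_one hk
  set b := (Mt - M).submatrix r id
  let p : F → Fin k × Fin 2 → ℝ := fun f ij => ![1 + X f ij.1, 1 - X f ij.1] ij.2
  let q : S → Fin k × Fin 2 → ℝ := fun s ij => ![(ε - b ij.1 s) / 2, (ε + b ij.1 s) / 2] ij.2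
  have hp : ∀ f, 0 ≤ p f := by
    rintro f ⟨i, j⟩
    obtain ⟨h₁, h₂⟩ := abs_le.mp (hX₁ f i)
    fin_cases j
    exacts [show 0 ≤ 1 + X f i by linarith, show 0 ≤ 1 - X f i by linarith]
  have hq : ∀ s, 0 ≤ q s := by
    rintro s ⟨i, j⟩
    obtain ⟨h₁, h₂⟩ := abs_le.mp (show |b i s| ≤ ε from hε (r i) s)
    fin_cases j
    exacts [show 0 ≤ (ε - b i s) / 2 by linarith, show 0 ≤ (ε + b i s) / 2 by linarith]
  have hpq : ∀ f s, Mt f s + ∑ ij, p f ij * q s ij = M f s + k * ε := by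
    intro f s
    have hfs : ∑ i, X f i * b i s = Mt f s - M f s := by
      simpa [mul_apply] using congrFun (congrFun hX f) s
    have hi : ∀ i, p f (i, 0) * q s (i, 0) + p f (i, 1) * q s (i, 1) = ε - X f i * b i s :=
      fun i => by simp only [p, q, Matrix.cons_val_zero, Matrix.cons_val_one]; ring
    simp only [Fintype.sum_prod_type, Fin.sum_univ_two, hi, Finset.sum_sub_distrib, hfs,
      Finset.sum_const, Finset.card_univ, Fintype.card_fin, nsmul_eq_mul]
    ring
  have := h.add_sum_mul p q hp hq
  simp only [hpq, Fintype.card_prod, Fintype.card_fin] at this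
  rwa [mul_comm k] at this

end SDPFactorization

theorem sdp_rounding_general {F S : Type*} [Fintype F] [Fintype S]
    (M Mt : Matrix F S ℝ)
    (k : ℕ) (hk : k = (Mt - M).rank)
    (ε : ℝ) (hε : ε = ⨆ f, ⨆ s, |Mt f s - M f s|)
    (d : ℕ) (hfact : IsSDPFactorization (fun f s => Mt f s) d) :
    IsSDPFactorization (fun f s => M f s + (k : ℝ) * ε) (d + 2 * k) ∧
    sdpRank (fun f s => M f s + (k : ℝ) * ε) ≤ sdpRank (fun f s => Mt f s) + 2 * k := by
  have hbound : ∀ f s, |Mt f s - M f s| ≤ ε := fun f s => hε ▸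
    (le_ciSup (Finite.bddAbove_range _) s).trans
      (le_ciSup (Finite.bddAbove_range fun f => ⨆ s, |Mt f s - M f s|) f)
  have hround : ∀ {d'}, IsSDPFactorization (fun f s => Mt f s) d' →
      IsSDPFactorization (fun f s => M f s + k * ε) (d' + 2 * k) :=
    fun h => h.add_rank_mul_of_abs_sub_le hk.symm hbound
  exact ⟨hround hfact, sdpRank_le (hround hfact.sdpRank)⟩

/-- Rounding a matrix approximation to a problem approximation, SDP case: if `M̃` is
nonnegative with a size-`d` SDP factorization, `k = rank(M̃ − M)` and
`ε = ‖M̃ − M‖_∞`, then `M + kε·J` (with `J` the all-ones matrix) admits a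
size-`(d + 2k)` SDP factorization; in particular
`rank_SDP (M + kε·J) ≤ rank_SDP M̃ + 2·rank(M̃ − M)`. -/
theorem sdp_rounding {F S : Type*} [Fintype F] [Fintype S]
    (M Mt : Matrix F S ℝ)
    (hM : ∀ f s, 0 ≤ M f s) (hMt : ∀ f s, 0 ≤ Mt f s)
    (k : ℕ) (hk : k = (Mt - M).rank)
    (ε : ℝ) (hε : ε = ⨆ f, ⨆ s, |Mt f s - M f s|)
    (d : ℕ) (hfact : IsSDPFactorization (fun f s => Mt f s) d) :
    IsSDPFactorization (fun f s => M f s + (k : ℝ) * ε) (d + 2 * k) ∧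
    sdpRank (fun f s => M f s + (k : ℝ) * ε) ≤ sdpRank (fun f s => Mt f s) + 2 * k :=
  sdp_rounding_general M Mt k hk ε hε d hfact
end

section
/- Let K be a simple graph on vertex set [n] and let H(K) be its conflict graph. Then the minimum size of a vertex cover of H(K) equals 2|E(K)| − maxcut(K), where maxcut(K) is the maximum of cut_K(s) over all total assignments s : [n] → {0,1}. -/
/-- A vertex of the conflict graph of `K`: a pair `(e, b)` where `e = {i,j}` is an edge
of `K` with `i < j` and `b ∈ {0,1}`, encoded as the triple `(i, j, b)`; it represents
the partial assignment `x_i = b`, `x_j = ¬b`. -/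
def ConflictVertex (n : ℕ) (K : SimpleGraph (Fin n)) : Type :=
  {p : Fin n × Fin n × Bool // p.1 < p.2.1 ∧ K.Adj p.1 p.2.1}

/-- The partial assignment associated to a conflict-graph vertex. -/
def assigns {n : ℕ} {K : SimpleGraph (Fin n)} (v : ConflictVertex n K) (x : Fin n) :
    Option Bool :=
  if x = v.val.1 then some v.val.2.2
  else if x = v.val.2.1 then some (!v.val.2.2) else none

/-- The conflict graph `H(K)`: two distinct partial assignments are adjacent iff they
assign different values to some common variable. -/
def conflictGraph (n : ℕ) (K : SimpleGraph (Fin n)) : SimpleGraph (ConflictVertex n K) :=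
  SimpleGraph.fromRel (fun v w => ∃ (x : Fin n) (b c : Bool),
    assigns v x = some b ∧ assigns w x = some c ∧ b ≠ c)

/-- `cut_K(s)`: the number of edges `{i,j}` of `K` with `s i ≠ s j`. -/
def cutK (n : ℕ) (K : SimpleGraph (Fin n)) [DecidableRel K.Adj] (s : Fin n → Bool) : ℕ :=
  (K.edgeFinset.filter (fun e => ¬ (e.map s).IsDiag)).card

/-- `maxcut(K)`: the maximum of `cut_K(s)` over all total assignments `s`. -/
def maxcutK (n : ℕ) (K : SimpleGraph (Fin n)) [DecidableRel K.Adj] : ℕ :=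
  Finset.univ.sup (fun s : Fin n → Bool => cutK n K s)

/-! Distinct vertices of `H(K)` are non-adjacent exactly when their partial assignments are
compatible, so an independent set of `H(K)` is a family of partial assignments with a common
extension `s : [n] → {0,1}`. The vertices compatible with a fixed `s` are one per edge cut by `s`,
so the largest independent set has `maxcut(K)` vertices; complements of independent sets are the
vertex covers, and `H(K)` has `2|E(K)|` vertices. -/

lemma Sym2.mk_inf_sup {α : Type*} [LinearOrder α] (e : Sym2 α) : s(e.inf, e.sup) = e :=
  Sym2.sortEquiv.symm_apply_apply e

namespace ConflictVertex

variable {n : ℕ} {K : SimpleGraph (Fin n)}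

instance : DecidableEq (ConflictVertex n K) := by unfold ConflictVertex; infer_instance

instance [DecidableRel K.Adj] : Fintype (ConflictVertex n K) := by
  unfold ConflictVertex; infer_instance

def edge (v : ConflictVertex n K) : Sym2 (Fin n) := s(v.val.1, v.val.2.1)

lemma edge_mem_edgeSet (v : ConflictVertex n K) : v.edge ∈ K.edgeSet := v.2.2

lemma inf_edge (v : ConflictVertex n K) : v.edge.inf = v.val.1 := by
  simp [edge, v.2.1.le]

lemma sup_edge (v : ConflictVertex n K) : v.edge.sup = v.val.2.1 := by
  simp [edge, v.2.1.le]

lemma ext_of_edge_eq {v w : ConflictVertex n K} (he : v.edge = w.edge)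
    (hb : v.val.2.2 = w.val.2.2) : v = w := by
  have hinf := congrArg Sym2.inf he
  have hsup := congrArg Sym2.sup he
  rw [inf_edge, inf_edge] at hinf
  rw [sup_edge, sup_edge] at hsup
  exact Subtype.ext (Prod.ext hinf (Prod.ext hsup hb))

def ofEdge {e : Sym2 (Fin n)} (he : e ∈ K.edgeSet) (b : Bool) : ConflictVertex n K :=
  have hadj : K.Adj e.inf e.sup := by
    rwa [← SimpleGraph.mem_edgeSet, Sym2.mk_inf_sup]
  ⟨(e.inf, e.sup, b), lt_of_le_of_ne e.inf_le_sup hadj.ne, hadj⟩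

lemma edge_ofEdge {e : Sym2 (Fin n)} (he : e ∈ K.edgeSet) (b : Bool) :
    (ofEdge he b).edge = e :=
  Sym2.mk_inf_sup e

def equivEdgeSetProdBool : ConflictVertex n K ≃ K.edgeSet × Bool where
  toFun v := (⟨v.edge, v.edge_mem_edgeSet⟩, v.val.2.2)
  invFun p := ofEdge p.1.2 p.2
  left_inv _ := ext_of_edge_eq (edge_ofEdge _ _) rfl
  right_inv _ := Prod.ext (Subtype.ext (edge_ofEdge _ _)) rfl

lemma card_eq_two_mul_card_edgeFinset [DecidableRel K.Adj] :
    Fintype.card (ConflictVertex n K) = 2 * K.edgeFinset.card := by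
  rw [Fintype.card_congr equivEdgeSetProdBool, Fintype.card_prod, Fintype.card_bool,
    SimpleGraph.edgeFinset_card, mul_comm]

def AgreesWith (v : ConflictVertex n K) (s : Fin n → Bool) : Prop :=
  ∀ x b, assigns v x = some b → s x = b

instance (v : ConflictVertex n K) (s : Fin n → Bool) : Decidable (v.AgreesWith s) := by
  unfold AgreesWith; infer_instance

lemma agreesWith_iff {v : ConflictVertex n K} {s : Fin n → Bool} :
    v.AgreesWith s ↔ s v.val.1 = v.val.2.2 ∧ s v.val.2.1 = !v.val.2.2 := by
  have hne : v.val.2.1 ≠ v.val.1 := v.2.1.ne'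
  refine ⟨fun h => ⟨h _ _ (by simp [assigns]), h _ _ (by simp [assigns, hne])⟩, ?_⟩
  rintro ⟨h1, h2⟩ x b hx
  unfold assigns at hx
  split_ifs at hx with hx1 hx2 <;> simp_all

lemma AgreesWith.not_adj {v w : ConflictVertex n K} {s : Fin n → Bool} (hv : v.AgreesWith s)
    (hw : w.AgreesWith s) : ¬ (conflictGraph n K).Adj v w := by
  rintro ⟨-, ⟨x, b, c, hb, hc, hbc⟩ | ⟨x, b, c, hb, hc, hbc⟩⟩
  · exact hbc ((hv x b hb).symm.trans (hw x c hc))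
  · exact hbc ((hw x b hb).symm.trans (hv x c hc))

lemma exists_agreesWith_of_isIndepSet {T : Set (ConflictVertex n K)}
    (hT : (conflictGraph n K).IsIndepSet T) : ∃ s : Fin n → Bool, ∀ v ∈ T, v.AgreesWith s := by
  classical
  -- Set `x` true iff some member of `T` does; a member setting `x` false would conflict with it.
  refine ⟨fun x => decide (∃ w ∈ T, assigns w x = some true), fun v hv x b hb => ?_⟩
  cases b
  · simp only [decide_eq_false_iff_not, not_exists, not_and]
    intro w hw hwx
    have hvw : v ≠ w := by rintro rfl; simp_all
    exact hT hv hw hvw ⟨hvw, Or.inl ⟨x, false, true, hb, hwx, Bool.false_ne_true⟩⟩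
  · exact decide_eq_true ⟨v, hv, hb⟩

end ConflictVertex

open ConflictVertex

def agreeingVertices {n : ℕ} (K : SimpleGraph (Fin n)) [DecidableRel K.Adj]
    (s : Fin n → Bool) : Finset (ConflictVertex n K) :=
  Finset.univ.filter (·.AgreesWith s)

section AgreeingVertices

variable {n : ℕ} {K : SimpleGraph (Fin n)} [DecidableRel K.Adj]

lemma card_agreeingVertices (s : Fin n → Bool) :
    (agreeingVertices K s).card = cutK n K s := by
  unfold agreeingVertices cutK
  refine Finset.card_bij (fun v _ => v.edge) (fun v hv => ?_) (fun v hv w hw he => ?_) ?_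
  · rw [Finset.mem_filter, agreesWith_iff] at hv
    rw [Finset.mem_filter, SimpleGraph.mem_edgeFinset]
    refine ⟨v.edge_mem_edgeSet, ?_⟩
    simp [edge, hv.2.1, hv.2.2]
  · rw [Finset.mem_filter, agreesWith_iff] at hv hw
    have h1 : v.val.1 = w.val.1 := by rw [← inf_edge, he, inf_edge]
    exact ext_of_edge_eq he (by rw [← hv.2.1, ← hw.2.1, h1])
  · intro e he
    rw [Finset.mem_filter, SimpleGraph.mem_edgeFinset] at he
    have hcut : s e.inf ≠ s e.sup := by
      have := he.2
      rwa [← Sym2.mk_inf_sup e, Sym2.map_mk, Sym2.mk_isDiag_iff] at this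
    refine ⟨ofEdge he.1 (s e.inf), ?_, edge_ofEdge _ _⟩
    rw [Finset.mem_filter, agreesWith_iff]
    exact ⟨Finset.mem_univ _, rfl, Bool.eq_not.mpr hcut.symm⟩

lemma isIndepSet_agreeingVertices (s : Fin n → Bool) :
    (conflictGraph n K).IsIndepSet (agreeingVertices K s : Set (ConflictVertex n K)) :=
  fun _ hv _ hw _ => (Finset.mem_filter.mp hv).2.not_adj (Finset.mem_filter.mp hw).2

lemma card_le_maxcutK_of_isIndepSet {T : Finset (ConflictVertex n K)}
    (hT : (conflictGraph n K).IsIndepSet (T : Set (ConflictVertex n K))) :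
    T.card ≤ maxcutK n K := by
  obtain ⟨s, hs⟩ := exists_agreesWith_of_isIndepSet hT
  calc T.card ≤ (agreeingVertices K s).card :=
        Finset.card_le_card fun v hv => Finset.mem_filter.mpr ⟨Finset.mem_univ v, hs v hv⟩
    _ = cutK n K s := card_agreeingVertices s
    _ ≤ maxcutK n K := Finset.le_sup (Finset.mem_univ s)

end AgreeingVertices

/-- The minimum size of a vertex cover of the conflict graph `H(K)` equals
`2|E(K)| − maxcut(K)`. -/
theorem min_vertexCover_conflictGraph (n : ℕ) (K : SimpleGraph (Fin n))
    [DecidableRel K.Adj] :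
    IsLeast {c : ℕ | ∃ S : Finset (ConflictVertex n K),
        (∀ v w : ConflictVertex n K, (conflictGraph n K).Adj v w → v ∈ S ∨ w ∈ S) ∧
        S.card = c}
      (2 * K.edgeFinset.card - maxcutK n K) := by
  obtain ⟨s, -, hs⟩ := Finset.exists_mem_eq_sup Finset.univ Finset.univ_nonempty (cutK n K)
  refine ⟨⟨(agreeingVertices K s)ᶜ, fun v w hvw => ?_, ?_⟩, ?_⟩
  · have hcover : (conflictGraph n K).IsVertexCover ↑(agreeingVertices K s)ᶜ := by
      rw [Finset.coe_compl, SimpleGraph.isVertexCover_compl]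
      exact isIndepSet_agreeingVertices s
    exact hcover hvw
  · rw [Finset.card_compl, card_eq_two_mul_card_edgeFinset, card_agreeingVertices, maxcutK, hs]
  · rintro _ ⟨S, hS, rfl⟩
    have hindep : (conflictGraph n K).IsIndepSet ↑Sᶜ := by
      rw [Finset.coe_compl, SimpleGraph.isIndepSet_compl_iff_isVertexCover]
      exact fun v w hvw => hS v w hvw
    have hle := card_le_maxcutK_of_isIndepSet hindep
    have hsum := Finset.card_add_card_compl S
    rw [card_eq_two_mul_card_edgeFinset] at hsum
    omega
end
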